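/- arXiv:0809.2166 — 3 statements merged into one kernel-verified Lean document; each statement's English description precedes it below -/
import Mathlib

section
/- Let q be a prime power, let G be a profinite group, and let N be a closed normal subgroup of G. Then the intersection of the kernels of all continuous group homomorphisms φ : N → ℤ/q satisfying φ(g⁻¹ng) = φ(n) for all g ∈ G and n ∈ N equals the topological closure of the subgroup of N generated by {n^q : n ∈ N} ∪ {n⁻¹g⁻¹ng : n ∈ N, g ∈ G}. -/
/-!
A `G`-invariant continuous homomorphism `φ : N → ℤ/q` kills the `q`-th powers and, since
`φ (g⁻¹ng) = φ n`, the elements `n⁻¹g⁻¹ng`; its kernel is closed, which gives `⊇`.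
For `⊆`, a closed subgroup `K` of the profinite group `N` is the intersection of the open
subgroups containing it, so a point `x ∉ K` lies outside some open `V ⊇ K`. As `V` contains
all commutators and `q`-th powers of `N`, it is normal and `N ⧸ V` is a finite abelian group of
exponent dividing `q`, whose homomorphisms to `ℤ/q` separate points. Pulled back to `N`, such a
homomorphism is continuous (its kernel contains `V`) and `G`-invariant (it kills `n⁻¹g⁻¹ng`).
-/

instance (n : ℕ) : TopologicalSpace (ZMod n) := ⊥

instance (n : ℕ) : DiscreteTopology (ZMod n) := ⟨rfl⟩

instance (q : ℕ) [NeZero q] : HasEnoughRootsOfUnity (Multiplicative (ZMod q)) q where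
  prim := ⟨.ofAdd 1, by
    rw [IsPrimitiveRoot.iff_orderOf, orderOf_ofAdd_eq_addOrderOf, ZMod.addOrderOf_one]⟩
  cyc := by
    have : IsCyclic (Multiplicative (ZMod q))ˣ := isCyclic_of_surjective _ toUnits.surjective
    infer_instance

theorem CommGroup.exists_monoidHom_zmod_apply_ne_one {B : Type*} [CommGroup B] [Finite B]
    {q : ℕ} [NeZero q] (hB : Monoid.exponent B ∣ q) {a : B} (ha : a ≠ 1) :
    ∃ φ : B →* Multiplicative (ZMod q), φ a ≠ 1 := by
  have := HasEnoughRootsOfUnity.of_dvd (Multiplicative (ZMod q)) hB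
  obtain ⟨φ, hφ⟩ := exists_apply_ne_one_of_hasEnoughRootsOfUnity B (Multiplicative (ZMod q)) ha
  exact ⟨toUnits.symm.toMonoidHom.comp φ, by simpa using hφ⟩

open IsMulCommutative in
theorem Subgroup.exists_monoidHom_zmod_le_ker_apply_ne_one {N : Type*} [Group N] {q : ℕ}
    [NeZero q] {V : Subgroup N} [V.FiniteIndex] (hcomm : _root_.commutator N ≤ V)
    (hpow : ∀ n : N, n ^ q ∈ V) {x : N} (hx : x ∉ V) :
    ∃ φ : N →* Multiplicative (ZMod q), V ≤ φ.ker ∧ φ x ≠ 1 := by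
  have : V.Normal := commutator_top_left_le_iff.mp ((commutator_mono le_rfl le_top).trans hcomm)
  have : IsMulCommutative (N ⧸ V) := Normal.quotient_commutative_iff_commutator_le.mpr hcomm
  have hexp : Monoid.exponent (N ⧸ V) ∣ q := Monoid.exponent_dvd_of_forall_pow_eq_one fun b ↦
    QuotientGroup.induction_on b fun n ↦ (QuotientGroup.eq_one_iff _).mpr (hpow n)
  obtain ⟨φ, hφ⟩ := CommGroup.exists_monoidHom_zmod_apply_ne_one hexp
    (a := (x : N ⧸ V)) (by rwa [Ne, QuotientGroup.eq_one_iff])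
  refine ⟨φ.comp (QuotientGroup.mk' V), fun v hv ↦ ?_, hφ⟩
  simp [(QuotientGroup.eq_one_iff v).mpr hv]

theorem MonoidHom.continuous_of_isOpen_le_ker {N M : Type*} [Group N] [TopologicalSpace N]
    [IsTopologicalGroup N] [Group M] [TopologicalSpace M] [DiscreteTopology M] (φ : N →* M)
    {V : Subgroup N} (hV : IsOpen (V : Set N)) (hVφ : V ≤ φ.ker) : Continuous φ := by
  refine continuous_of_continuousAt_one φ ?_
  rw [ContinuousAt, nhds_discrete M, map_one, Filter.tendsto_pure]
  exact Filter.mem_of_superset (hV.mem_nhds V.one_mem) hVφ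

theorem ProfiniteGrp.exists_isOpen_le_notMem {N : Type*} [Group N] [TopologicalSpace N]
    [IsTopologicalGroup N] [CompactSpace N] [TotallyDisconnectedSpace N] {K : Subgroup N}
    (hK : IsClosed (K : Set N)) {x : N} (hx : x ∉ K) :
    ∃ V : Subgroup N, IsOpen (V : Set N) ∧ K ≤ V ∧ x ∉ V := by
  have hx' : x ∉ sInf {V : Subgroup N | IsOpen (V : Set N) ∧ K ≤ V} := by
    rwa [← closedSubgroup_eq_sInf_open ⟨K, hK⟩]
  simpa [Subgroup.mem_sInf] using hx'

namespace Subgroup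

variable {G : Type*} [Group G]

def powCommutatorSet (q : ℕ) (N : Subgroup G) : Set N :=
  {x | ∃ n : N, x = n ^ q} ∪ {x : N | ∃ (n : N) (g : G), (x : G) = (n : G)⁻¹ * g⁻¹ * n * g}

variable {q : ℕ} {N : Subgroup G}

theorem commutator_le_closure_powCommutatorSet :
    _root_.commutator N ≤ closure (powCommutatorSet q N) := by
  rw [_root_.commutator, commutator_le]
  rintro a - b -
  refine subset_closure (Or.inr ⟨a⁻¹, (b : G)⁻¹, ?_⟩)
  simp [commutatorElement_def]

theorem inv_mul_conj_mem_powCommutatorSet (hN : N.Normal) (n : N) (g : G) :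
    n⁻¹ * ⟨g⁻¹ * n * g, hN.conj_mem' n n.2 g⟩ ∈ powCommutatorSet q N :=
  Or.inr ⟨n, g, by simp [mul_assoc]⟩

variable [TopologicalSpace G] [IsTopologicalGroup G]

theorem topologicalClosure_closure_powCommutatorSet_le_ker (hN : N.Normal)
    {φ : N →* Multiplicative (ZMod q)} (hφ : Continuous φ)
    (hconj : ∀ (g : G) (n : N), φ ⟨g⁻¹ * n * g, hN.conj_mem' n n.2 g⟩ = φ n) :
    (closure (powCommutatorSet q N)).topologicalClosure ≤ φ.ker := by
  refine topologicalClosure_minimal _ ?_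
    (by rw [MonoidHom.coe_ker]; exact isClosed_singleton.preimage hφ)
  rw [closure_le]
  rintro x (⟨n, rfl⟩ | ⟨n, g, hx⟩)
  · rw [SetLike.mem_coe, MonoidHom.mem_ker, map_pow, ← toAdd_eq_zero, toAdd_pow, nsmul_eq_mul,
      ZMod.natCast_self, zero_mul]
  · have : x = n⁻¹ * ⟨g⁻¹ * n * g, hN.conj_mem' n n.2 g⟩ := Subtype.ext (by simp [hx, mul_assoc])
    simp [this, hconj]

theorem exists_continuous_conj_invariant_apply_ne_one [CompactSpace G]
    [TotallyDisconnectedSpace G] [NeZero q] (hN : N.Normal) (hNc : IsClosed (N : Set G)) {x : N}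
    (hx : x ∉ (closure (powCommutatorSet q N)).topologicalClosure) :
    ∃ φ : N →* Multiplicative (ZMod q), Continuous φ ∧
      (∀ (g : G) (n : N), φ ⟨g⁻¹ * n * g, hN.conj_mem' n n.2 g⟩ = φ n) ∧ φ x ≠ 1 := by
  have : CompactSpace N := isCompact_iff_compactSpace.mp hNc.isCompact
  obtain ⟨V, hVo, hKV, hxV⟩ :=
    ProfiniteGrp.exists_isOpen_le_notMem (isClosed_topologicalClosure _) hx
  have hSV : powCommutatorSet q N ⊆ V := fun s hs ↦
    hKV (le_topologicalClosure _ (subset_closure hs))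
  have := quotient_finite_of_isOpen V hVo
  have : V.FiniteIndex := finiteIndex_of_finite_quotient
  obtain ⟨φ, hVφ, hφx⟩ := exists_monoidHom_zmod_le_ker_apply_ne_one
    (commutator_le_closure_powCommutatorSet.trans ((le_topologicalClosure _).trans hKV))
    (fun n ↦ hSV (Or.inl ⟨n, rfl⟩)) hxV
  refine ⟨φ, φ.continuous_of_isOpen_le_ker hVo hVφ, fun g n ↦ ?_, hφx⟩
  have := hVφ (hSV (inv_mul_conj_mem_powCommutatorSet hN n g))
  rwa [MonoidHom.mem_ker, map_mul, map_inv, inv_mul_eq_one, eq_comm] at this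

end Subgroup

/-- Let `q` be a prime power, `G` a profinite group and `N` a closed normal subgroup of
`G`.  The intersection of the kernels of all continuous homomorphisms `φ : N → ℤ/q` that
are invariant under conjugation by `G` equals the topological closure of the subgroup of
`N` generated by the `q`-th powers `n^q` and the commutators `n⁻¹g⁻¹ng` (`n ∈ N`,
`g ∈ G`). -/
theorem kernels_intersection_eq_closure (q : ℕ) (hq : ∃ (p k : ℕ), p.Prime ∧ 0 < k ∧ q = p ^ k)
    (G : Type*) [Group G] [TopologicalSpace G] [IsTopologicalGroup G]
    [CompactSpace G] [TotallyDisconnectedSpace G]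
    (N : Subgroup G) (hN : N.Normal) (hNclosed : IsClosed (N : Set G)) :
    (⨅ φ ∈ {φ : N →* Multiplicative (ZMod q) | Continuous φ ∧
        ∀ (g : G) (n : N), φ ⟨g⁻¹ * n * g, by simpa using hN.conj_mem n n.2 g⁻¹⟩ = φ n},
      φ.ker) =
    (Subgroup.closure
      ({x : N | ∃ n : N, x = n ^ q} ∪
       {x : N | ∃ (n : N) (g : G), (x : G) = (n : G)⁻¹ * g⁻¹ * n * g})).topologicalClosure := by
  obtain ⟨p, k, hp, -, rfl⟩ := hq
  have : NeZero (p ^ k) := ⟨pow_ne_zero k hp.ne_zero⟩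
  change _ = (Subgroup.closure (Subgroup.powCommutatorSet (p ^ k) N)).topologicalClosure
  refine le_antisymm (fun x hx ↦ ?_) (le_iInf₂ fun φ hφ ↦
    Subgroup.topologicalClosure_closure_powCommutatorSet_le_ker hN hφ.1 hφ.2)
  by_contra hxK
  obtain ⟨φ, hφc, hφconj, hφx⟩ :=
    Subgroup.exists_continuous_conj_invariant_apply_ne_one hN hNclosed hxK
  exact hφx (Subgroup.mem_iInf.mp (Subgroup.mem_iInf.mp hx φ) ⟨hφc, hφconj⟩)
end

section
/- Let q = p^d be a prime power and let G be a finite abelian p-group of exponent dividing q. Let ψ : G → ℤ/q be a group homomorphism, let ψ̂ : G → ℤ/q² be any function with π ∘ ψ̂ = ψ, and let χ = χ_{ψ,ψ̂} be the associated Bockstein 2-cocycle. If χ is a 2-coboundary, i.e. there exists f : G → ℤ/q with χ(σ,τ) = f(σ) + f(τ) − f(στ) for all σ, τ ∈ G, then ψ = 0. (In cohomological terms: the Bockstein homomorphism β_G : H¹(G, ℤ/q) → H²(G, ℤ/q) is injective.) -/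
/-- The reduction homomorphism `π : ℤ/q² → ℤ/q`. -/
noncomputable def piHom (q : ℕ) : ZMod (q ^ 2) →+* ZMod q :=
  ZMod.castHom (dvd_pow_self q (by norm_num : (2 : ℕ) ≠ 0)) (ZMod q)

/-- The injective additive map `ι : ℤ/q → ℤ/q²`, `x mod q ↦ qx mod q²`. -/
def iotaMap (q : ℕ) (x : ZMod q) : ZMod (q ^ 2) := (q : ZMod (q ^ 2)) * x.val

lemma qq_eq_zero (q : ℕ) : ((q : ZMod (q ^ 2)) * q) = 0 := by
  have h : ((q ^ 2 : ℕ) : ZMod (q ^ 2)) = 0 := ZMod.natCast_self _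
  push_cast at h
  linear_combination h

lemma iota_natCast (q : ℕ) [NeZero q] (n : ℕ) :
    iotaMap q (n : ZMod q) = (q : ZMod (q ^ 2)) * n := by
  have hn : (n : ZMod (q ^ 2))
      = ((n % q : ℕ) : ZMod (q ^ 2)) + (q : ZMod (q ^ 2)) * ((n / q : ℕ)) := by
    conv_lhs => rw [← Nat.mod_add_div n q]
    push_cast; ring
  unfold iotaMap
  rw [ZMod.val_natCast]
  linear_combination (-(q : ZMod (q ^ 2))) * hn - ((n / q : ℕ) : ZMod (q ^ 2)) * qq_eq_zero q

lemma iota_add (q : ℕ) [NeZero q] (a b : ZMod q) :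
    iotaMap q (a + b) = iotaMap q a + iotaMap q b := by
  have ha : ((a.val : ℕ) : ZMod q) = a := by rw [ZMod.natCast_val, ZMod.cast_id]
  have hb : ((b.val : ℕ) : ZMod q) = b := by rw [ZMod.natCast_val, ZMod.cast_id]
  calc iotaMap q (a + b) = iotaMap q (((a.val + b.val : ℕ) : ZMod q)) := by
        rw [Nat.cast_add, ha, hb]
    _ = (q : ZMod (q ^ 2)) * ((a.val + b.val : ℕ)) := iota_natCast q _
    _ = iotaMap q a + iotaMap q b := by
        unfold iotaMap; push_cast; ring

lemma iota_sub (q : ℕ) [NeZero q] (a b : ZMod q) :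
    iotaMap q (a - b) = iotaMap q a - iotaMap q b := by
  have h := iota_add q (a - b) b
  rw [sub_add_cancel] at h
  linear_combination -h

/-- Let `q = p^d` be a prime power and `G` a finite abelian `p`-group of exponent dividing
`q`.  Let `ψ : G → ℤ/q` be a homomorphism, `ψ̂ : G → ℤ/q²` a set-theoretic lift, and `χ`
the associated Bockstein 2-cocycle (`ι(χ(σ,τ)) = ψ̂(σ) + ψ̂(τ) - ψ̂(στ)`).  If `χ` is a
2-coboundary then `ψ = 0`: the Bockstein homomorphism `β_G : H¹(G,ℤ/q) → H²(G,ℤ/q)` is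
injective. -/
theorem bockstein_injective (p d q : ℕ) (hp : p.Prime) (hd : 0 < d) (hq : q = p ^ d)
    (G : Type*) [CommGroup G] [Finite G] (hexp : ∀ g : G, g ^ q = 1)
    (ψ : G →* Multiplicative (ZMod q)) (ψhat : G → ZMod (q ^ 2))
    (hlift : ∀ g : G, piHom q (ψhat g) = Multiplicative.toAdd (ψ g))
    (χ : G → G → ZMod q)
    (hχ : ∀ σ τ : G, iotaMap q (χ σ τ) = ψhat σ + ψhat τ - ψhat (σ * τ))
    (f : G → ZMod q)
    (hf : ∀ σ τ : G, χ σ τ = f σ + f τ - f (σ * τ)) :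
    ∀ g : G, ψ g = 1 := by
  have hq0 : q ≠ 0 := by
    subst hq; exact pow_ne_zero _ hp.pos.ne'
  haveI : NeZero q := ⟨hq0⟩
  set F : G → ZMod (q ^ 2) := fun g => ψhat g - iotaMap q (f g) with hF
  have hFadd : ∀ σ τ : G, F (σ * τ) = F σ + F τ := by
    intro σ τ
    have h1 := hχ σ τ
    rw [hf σ τ, iota_sub, iota_add] at h1
    simp only [hF]
    linear_combination h1
  have hF1 : F 1 = 0 := by
    have h := hFadd 1 1
    rw [mul_one] at h
    linear_combination -h
  have hFpow : ∀ (g : G) (n : ℕ), F (g ^ n) = n • F g := by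
    intro g n
    induction n with
    | zero => simpa using hF1
    | succ n ih =>
        have e : g ^ (n + 1) = g ^ n * g := pow_succ g n
        rw [e, hFadd (g ^ n) g, ih, succ_nsmul]
  have hqF : ∀ g : G, (q : ZMod (q ^ 2)) * ψhat g = 0 := by
    intro g
    have h := hFpow g q
    rw [hexp g, hF1] at h
    have h' : (q : ℕ) • F g = 0 := h.symm
    rw [nsmul_eq_mul] at h'
    have hiota : (q : ZMod (q ^ 2)) * iotaMap q (f g) = 0 := by
      unfold iotaMap
      rw [← mul_assoc, qq_eq_zero, zero_mul]
    simp only [hF] at h'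
    rw [mul_sub, hiota, sub_zero] at h'
    exact h'
  intro g
  have hx := hqF g
  set x := ψhat g with hxdef
  have hval : ((q * x.val : ℕ) : ZMod (q ^ 2)) = 0 := by
    push_cast
    rw [ZMod.natCast_val, ZMod.cast_id]
    exact hx
  rw [ZMod.natCast_eq_zero_iff] at hval
  obtain ⟨k, hk⟩ := hval
  have hdvd : q ∣ x.val :=
    ⟨k, Nat.eq_of_mul_eq_mul_left (Nat.pos_of_ne_zero hq0) (by rw [hk]; ring)⟩
  have hpi : piHom q x = 0 := by
    unfold piHom
    rw [ZMod.castHom_apply, ← ZMod.natCast_val, ZMod.natCast_eq_zero_iff]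
    exact hdvd
  have h2 := hlift g
  rw [hpi] at h2
  exact toAdd_eq_zero.mp h2.symm
end

section
/- Let q be a prime power, let n be a natural number, and let G = (ℤ/q)^n. For every 2-cocycle c : G × G → ℤ/q (for the trivial action), there exist finitely many group homomorphisms ψ₁, …, ψ_m, ψ'₁, …, ψ'_m : G → ℤ/q, a group homomorphism ψ₀ : G → ℤ/q with a lift ψ̂₀ : G → ℤ/q² (π ∘ ψ̂₀ = ψ₀), and a function f : G → ℤ/q such that c(σ,τ) = Σ_{i=1}^{m} ψᵢ(σ)·ψ'ᵢ(τ) + χ_{ψ₀,ψ̂₀}(σ,τ) + f(σ) + f(τ) − f(στ) for all σ, τ ∈ G. (In cohomological terms: H²(G, ℤ/q) is generated by its decomposable part H²_dec(G) together with the image of the Bockstein homomorphism β_G.) -/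
section Cocycle

variable {G H M : Type*} [AddCommGroup M]

def IsTwoCocycle [Add G] (c : G → G → M) : Prop :=
  ∀ σ τ ρ, c σ τ + c (σ + τ) ρ = c τ ρ + c σ (τ + ρ)

lemma IsTwoCocycle.comp [AddZeroClass G] [AddZeroClass H] {c : H → H → M}
    (hc : IsTwoCocycle c) (e : G →+ H) : IsTwoCocycle fun σ τ => c (e σ) (e τ) := by
  intro σ τ ρ
  simpa only [map_add] using hc (e σ) (e τ) (e ρ)

lemma IsTwoCocycle.apply_zero_right [AddZeroClass G] {c : G → G → M} (hc : IsTwoCocycle c)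
    (σ : G) : c σ 0 = c 0 0 := by
  have h := hc σ 0 0
  simp only [add_zero] at h
  exact add_right_cancel h

def cocyclePrimitive [AddMonoid G] (c : G → G → M) (g : G) (k : ℕ) : M :=
  c 0 0 - ∑ j ∈ Finset.range k, c (j • g) g

lemma IsTwoCocycle.apply_nsmul_nsmul [AddMonoid G] {c : G → G → M} (hc : IsTwoCocycle c)
    (g : G) (m n : ℕ) :
    c (m • g) (n • g) = cocyclePrimitive c g m + cocyclePrimitive c g n
      - cocyclePrimitive c g (m + n) := by
  induction n with
  | zero => simp [cocyclePrimitive, hc.apply_zero_right]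
  | succ n ih =>
    have h := hc (m • g) (n • g) g
    rw [← add_nsmul, ← succ_nsmul] at h
    simp only [cocyclePrimitive, ← add_assoc, Finset.sum_range_succ] at ih ⊢
    linear_combination (norm := abel) ih - h

lemma IsTwoCocycle.cocyclePrimitive_add_mul [AddMonoid G] {c : G → G → M}
    (hc : IsTwoCocycle c) {g : G} {N : ℕ} (hN : N • g = 0) (x k : ℕ) :
    cocyclePrimitive c g (x + N * k) =
      cocyclePrimitive c g x + k • (cocyclePrimitive c g N - c 0 0) := by
  induction k with
  | zero => simp
  | succ k ih =>
    have h := hc.apply_nsmul_nsmul g (x + N * k) N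
    rw [hN, hc.apply_zero_right] at h
    rw [mul_add_one, ← Nat.add_assoc, succ_nsmul, ← add_assoc, ← ih]
    linear_combination (norm := abel) h

lemma IsTwoCocycle.commutator_add_left [AddCommGroup G] {c : G → G → M} (hc : IsTwoCocycle c)
    (x x' y : G) :
    c (x + x') y - c y (x + x') = (c x y - c y x) + (c x' y - c y x') := by
  have A := hc x x' y
  have B := hc x y x'
  have C := hc y x x'
  rw [add_comm y x'] at B
  rw [add_comm y x] at C
  linear_combination (norm := abel) A - B + C

lemma IsTwoCocycle.apply_prod [AddZeroClass G] [AddZeroClass H] {c : G × H → G × H → M}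
    (hc : IsTwoCocycle c) (a a' : G) (b b' : H) :
    c (a, b) (a', b') = c (a, 0) (a', 0) + c (0, b) (0, b') + (c (0, b) (a', 0) - c (a', 0) (0, b))
      + c (a + a', 0) (0, b + b') - c (a, 0) (0, b) - c (a', 0) (0, b') := by
  have I1 := hc (a, 0) (0, b) (a', b')
  have I2 := hc (0, b) (a', 0) (0, b')
  have I3 := hc (a', 0) (0, b) (0, b')
  have I4 := hc (a, 0) (a', 0) (0, b + b')
  simp only [Prod.mk_add_mk, add_zero, zero_add] at I1 I2 I3 I4
  linear_combination (norm := abel) I1 - I2 + I3 - I4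

end Cocycle

lemma iotaMap_natCast (q k : ℕ) : iotaMap q k = q * k := by
  have hq : (q : ZMod (q ^ 2)) * q = 0 := by
    rw [← Nat.cast_mul, ← sq, ZMod.natCast_self]
  have hk := congrArg (Nat.cast : ℕ → ZMod (q ^ 2)) (Nat.mod_add_div k q)
  push_cast at hk
  rw [iotaMap, ZMod.val_natCast]
  linear_combination (q : ZMod (q ^ 2)) * hk - (k / q : ℕ) * hq

lemma iotaMap_add (q : ℕ) [NeZero q] (x y : ZMod q) :
    iotaMap q (x + y) = iotaMap q x + iotaMap q y := by
  conv_rhs => rw [← ZMod.natCast_zmod_val x, ← ZMod.natCast_zmod_val y]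
  rw [show x + y = ((x.val + y.val : ℕ) : ZMod q) by simp, iotaMap_natCast, iotaMap_natCast,
    iotaMap_natCast]
  push_cast
  ring

lemma ZMod.val_add_add_mul_div {q : ℕ} [NeZero q] (a b : ZMod q) :
    (a + b).val + q * ((a.val + b.val) / q) = a.val + b.val := by
  rw [ZMod.val_add]
  exact Nat.mod_add_div _ _

section DecBockstein

variable {q : ℕ} {G H : Type*}

/-- `c` represents a class in `H²_dec(G) + β(H¹(G, ℤ/q))`. -/
def HasDecBocksteinForm (q : ℕ) [AddZeroClass G] (c : G → G → ZMod q) : Prop :=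
  ∃ (m : ℕ) (ψ ψ' : Fin m → (G →+ ZMod q)) (ψ₀ : G →+ ZMod q)
    (ψhat₀ : G → ZMod (q ^ 2)) (χ : G → G → ZMod q) (f : G → ZMod q),
    (∀ σ, piHom q (ψhat₀ σ) = ψ₀ σ) ∧
    (∀ σ τ, iotaMap q (χ σ τ) = ψhat₀ σ + ψhat₀ τ - ψhat₀ (σ + τ)) ∧
    (∀ σ τ, c σ τ = (∑ i, ψ i σ * ψ' i τ) + χ σ τ + f σ + f τ - f (σ + τ))

lemma HasDecBocksteinForm.congr [AddZeroClass G] {c c' : G → G → ZMod q}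
    (h : HasDecBocksteinForm q c') (hcc' : ∀ σ τ, c σ τ = c' σ τ) : HasDecBocksteinForm q c := by
  obtain ⟨m, ψ, ψ', ψ₀, ψhat₀, χ, f, hlift, hχ, hc'⟩ := h
  exact ⟨m, ψ, ψ', ψ₀, ψhat₀, χ, f, hlift, hχ, fun σ τ => (hcc' σ τ).trans (hc' σ τ)⟩

lemma HasDecBocksteinForm.add [NeZero q] [AddZeroClass G] {c₁ c₂ : G → G → ZMod q}
    (h₁ : HasDecBocksteinForm q c₁) (h₂ : HasDecBocksteinForm q c₂) :
    HasDecBocksteinForm q fun σ τ => c₁ σ τ + c₂ σ τ := by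
  obtain ⟨m₁, ψ₁, ψ'₁, ψ₀₁, ψhat₀₁, χ₁, f₁, hlift₁, hχ₁, hc₁⟩ := h₁
  obtain ⟨m₂, ψ₂, ψ'₂, ψ₀₂, ψhat₀₂, χ₂, f₂, hlift₂, hχ₂, hc₂⟩ := h₂
  refine ⟨m₁ + m₂, Fin.append ψ₁ ψ₂, Fin.append ψ'₁ ψ'₂, ψ₀₁ + ψ₀₂, ψhat₀₁ + ψhat₀₂,
    χ₁ + χ₂, f₁ + f₂, fun σ => ?_, fun σ τ => ?_, fun σ τ => ?_⟩
  · simp [hlift₁, hlift₂]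
  · simp only [Pi.add_apply, iotaMap_add, hχ₁, hχ₂]
    ring
  · simp only [Fin.sum_univ_add, Fin.append_left, Fin.append_right, Pi.add_apply, hc₁, hc₂]
    ring

lemma HasDecBocksteinForm.comp [AddZeroClass G] [AddZeroClass H] {c : H → H → ZMod q}
    (h : HasDecBocksteinForm q c) (e : G →+ H) :
    HasDecBocksteinForm q fun σ τ => c (e σ) (e τ) := by
  obtain ⟨m, ψ, ψ', ψ₀, ψhat₀, χ, f, hlift, hχ, hc⟩ := h
  refine ⟨m, fun i => (ψ i).comp e, fun i => (ψ' i).comp e, ψ₀.comp e, ψhat₀ ∘ e,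
    fun σ τ => χ (e σ) (e τ), f ∘ e, fun σ => hlift (e σ), fun σ τ => ?_, fun σ τ => ?_⟩
  · simpa using hχ (e σ) (e τ)
  · simpa using hc (e σ) (e τ)

lemma hasDecBocksteinForm_coboundary [AddZeroClass G] (f : G → ZMod q) :
    HasDecBocksteinForm q fun σ τ => f σ + f τ - f (σ + τ) :=
  ⟨0, 0, 0, 0, 0, 0, f, fun _ => by simp, fun _ _ => by simp [iotaMap], fun _ _ => by simp⟩

lemma hasDecBocksteinForm_mul [AddZeroClass G] (ψ ψ' : G →+ ZMod q) :
    HasDecBocksteinForm q fun σ τ => ψ σ * ψ' τ :=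
  ⟨1, fun _ => ψ, fun _ => ψ', 0, 0, 0, 0, fun _ => by simp, fun _ _ => by simp [iotaMap],
    fun _ _ => by simp⟩

lemma hasDecBocksteinForm_of_subsingleton [AddZeroClass G] [Subsingleton G]
    (c : G → G → ZMod q) : HasDecBocksteinForm q c :=
  (hasDecBocksteinForm_coboundary fun _ => c 0 0).congr fun σ τ => by
    rw [Subsingleton.elim σ 0, Subsingleton.elim τ 0]
    ring

/-- The Bockstein cocycle of `x ↦ x * T` for the lift `x ↦ x.val * T.val` is the carry times `T`. -/
lemma hasDecBocksteinForm_carry_mul [NeZero q] (T : ZMod q) :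
    HasDecBocksteinForm q fun a b : ZMod q => (((a.val + b.val) / q : ℕ) : ZMod q) * T := by
  refine ⟨0, 0, 0, AddMonoidHom.mulRight T, fun x => ((x.val * T.val : ℕ) : ZMod (q ^ 2)),
    fun a b => (((a.val + b.val) / q : ℕ) : ZMod q) * T, 0, fun x => ?_, fun a b => ?_,
    fun a b => by simp⟩
  · beta_reduce
    rw [map_natCast, Nat.cast_mul, ZMod.natCast_zmod_val, ZMod.natCast_zmod_val]
    rfl
  · have hcarry := congrArg (Nat.cast : ℕ → ZMod (q ^ 2)) (ZMod.val_add_add_mul_div a b)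
    push_cast at hcarry
    have hχ : (((a.val + b.val) / q : ℕ) : ZMod q) * T =
        (((a.val + b.val) / q * T.val : ℕ) : ZMod q) := by
      rw [Nat.cast_mul, ZMod.natCast_zmod_val]
    beta_reduce
    rw [hχ, iotaMap_natCast]
    push_cast
    linear_combination (T.val : ZMod (q ^ 2)) * hcarry

end DecBockstein

section Classification

variable {q : ℕ} [NeZero q]

theorem IsTwoCocycle.hasDecBocksteinForm_zmod {c : ZMod q → ZMod q → ZMod q}
    (hc : IsTwoCocycle c) : HasDecBocksteinForm q c := by
  set F := cocyclePrimitive c 1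
  refine ((hasDecBocksteinForm_carry_mul (c 0 0 - F q)).add
    (hasDecBocksteinForm_coboundary fun a => F a.val)).congr fun a b => ?_
  have hval (x : ZMod q) : x.val • (1 : ZMod q) = x := by simp
  have hF := hc.cocyclePrimitive_add_mul (ZMod.natCast_self q ▸ nsmul_one q) (a + b).val
    ((a.val + b.val) / q)
  rw [ZMod.val_add_add_mul_div, nsmul_eq_mul] at hF
  rw [← hval a, ← hval b, hc.apply_nsmul_nsmul, hF, hval a, hval b]
  ring

theorem IsTwoCocycle.hasDecBocksteinForm_prod {B : Type*} [AddCommGroup B]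
    (hB : ∀ c : B → B → ZMod q, IsTwoCocycle c → HasDecBocksteinForm q c)
    {c : ZMod q × B → ZMod q × B → ZMod q} (hc : IsTwoCocycle c) : HasDecBocksteinForm q c := by
  set g : B → ZMod q → ZMod q := fun b a => c (0, b) (a, 0) - c (a, 0) (0, b)
  have hg_left (b b' : B) (a : ZMod q) : g (b + b') a = g b a + g b' a := by
    simpa using hc.commutator_add_left (0, b) (0, b') (a, 0)
  have hg_right (b : B) (a a' : ZMod q) : g b (a + a') = g b a + g b a' := by
    have h := hc.commutator_add_left (a, 0) (a', 0) (0, b)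
    simp only [Prod.mk_add_mk, add_zero] at h
    linear_combination -h
  let ψ : B →+ ZMod q := AddMonoidHom.mk' (g · 1) fun b b' => hg_left b b' 1
  have hg (b : B) (a : ZMod q) : g b a = ψ b * a := by
    simpa [ψ, mul_comm] using ZMod.map_smul (AddMonoidHom.mk' (g b) (hg_right b)) a 1
  have hA := (hc.comp (AddMonoidHom.inl (ZMod q) B)).hasDecBocksteinForm_zmod
  have hB' := hB _ (hc.comp (AddMonoidHom.inr (ZMod q) B))
  refine (((hA.comp (AddMonoidHom.fst _ _)).add (hB'.comp (AddMonoidHom.snd _ _))).add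
    ((hasDecBocksteinForm_mul (ψ.comp (AddMonoidHom.snd _ _)) (AddMonoidHom.fst _ _)).add
      (hasDecBocksteinForm_coboundary fun σ => -c (σ.1, 0) (0, σ.2)))).congr ?_
  rintro ⟨a, b⟩ ⟨a', b'⟩
  have hmixed := hg b a'
  simp only [g] at hmixed
  simp only [hc.apply_prod a a' b b', AddMonoidHom.coe_comp, Function.comp_apply,
    AddMonoidHom.inl_apply, AddMonoidHom.inr_apply, AddMonoidHom.coe_fst, AddMonoidHom.coe_snd,
    Prod.mk_add_mk, hmixed]
  ring

theorem IsTwoCocycle.hasDecBocksteinForm_pi :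
    ∀ {n : ℕ} {c : (Fin n → ZMod q) → (Fin n → ZMod q) → ZMod q},
      IsTwoCocycle c → HasDecBocksteinForm q c
  | 0, c, _ => hasDecBocksteinForm_of_subsingleton c
  | n + 1, c, hc => by
    let e := (Fin.consLinearEquiv ℕ fun _ : Fin (n + 1) => ZMod q).toAddEquiv
    have h := ((hc.comp e.toAddMonoidHom).hasDecBocksteinForm_prod
      fun _ => hasDecBocksteinForm_pi).comp e.symm.toAddMonoidHom
    simpa using h

end Classification

theorem H2_generated_by_dec_and_bockstein_general (p d q : ℕ) (hp : p.Prime)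
    (hq : q = p ^ d) (n : ℕ)
    (c : (Fin n → ZMod q) → (Fin n → ZMod q) → ZMod q)
    (hcocycle : ∀ σ τ ρ : Fin n → ZMod q, c σ τ + c (σ + τ) ρ = c τ ρ + c σ (τ + ρ)) :
    ∃ (m : ℕ) (ψ ψ' : Fin m → ((Fin n → ZMod q) →+ ZMod q))
      (ψ₀ : (Fin n → ZMod q) →+ ZMod q) (ψhat₀ : (Fin n → ZMod q) → ZMod (q ^ 2))
      (χ : (Fin n → ZMod q) → (Fin n → ZMod q) → ZMod q)
      (f : (Fin n → ZMod q) → ZMod q),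
      (∀ σ : Fin n → ZMod q, piHom q (ψhat₀ σ) = ψ₀ σ) ∧
      (∀ σ τ : Fin n → ZMod q, iotaMap q (χ σ τ) = ψhat₀ σ + ψhat₀ τ - ψhat₀ (σ + τ)) ∧
      (∀ σ τ : Fin n → ZMod q,
        c σ τ = (∑ i, ψ i σ * ψ' i τ) + χ σ τ + f σ + f τ - f (σ + τ)) := by
  have : NeZero q := ⟨hq ▸ pow_ne_zero d hp.ne_zero⟩
  exact IsTwoCocycle.hasDecBocksteinForm_pi hcocycle

/-- Let `q` be a prime power and `G = (ℤ/q)ⁿ`.  Every 2-cocycle `c : G × G → ℤ/q` is,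
modulo a 2-coboundary, a sum of cup-product cocycles and a Bockstein 2-cocycle:
`H²(G, ℤ/q)` is generated by its decomposable part together with the image of the
Bockstein homomorphism. -/
theorem H2_generated_by_dec_and_bockstein (p d q : ℕ) (hp : p.Prime) (hd : 0 < d)
    (hq : q = p ^ d) (n : ℕ)
    (c : (Fin n → ZMod q) → (Fin n → ZMod q) → ZMod q)
    (hcocycle : ∀ σ τ ρ : Fin n → ZMod q, c σ τ + c (σ + τ) ρ = c τ ρ + c σ (τ + ρ)) :
    ∃ (m : ℕ) (ψ ψ' : Fin m → ((Fin n → ZMod q) →+ ZMod q))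
      (ψ₀ : (Fin n → ZMod q) →+ ZMod q) (ψhat₀ : (Fin n → ZMod q) → ZMod (q ^ 2))
      (χ : (Fin n → ZMod q) → (Fin n → ZMod q) → ZMod q)
      (f : (Fin n → ZMod q) → ZMod q),
      (∀ σ : Fin n → ZMod q, piHom q (ψhat₀ σ) = ψ₀ σ) ∧
      (∀ σ τ : Fin n → ZMod q, iotaMap q (χ σ τ) = ψhat₀ σ + ψhat₀ τ - ψhat₀ (σ + τ)) ∧
      (∀ σ τ : Fin n → ZMod q,
        c σ τ = (∑ i, ψ i σ * ψ' i τ) + χ σ τ + f σ + f τ - f (σ + τ)) :=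
  H2_generated_by_dec_and_bockstein_general p d q hp hq n c hcocycle
end
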